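/- Let L = P + m_V on L²(T^d), where P = A − I with A convolution by a symmetric probability density ã ∈ L¹(T^d) (ã(−z) = ã(z), ∫ã = 1), and V ∈ L^∞(T^d), V ≤ 0, V < 0 on a set of positive measure. Suppose (Pg,g) ≤ −c₂‖g‖² for all g ⊥ 1, with 0 < c₂ ≤ 1. Then for every f ∈ L²(T^d), (Lf, f) ≤ −κ ‖f‖², where κ = min{c₂ γ₀², c₁/2}, c₁ = ‖V‖_{L¹}, and γ₀ = (2/9)·c₁/‖V‖_{L²}. -/

import Mathlib

open MeasureTheory RealInnerProductSpace

noncomputable section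

abbrev Torus (d : ℕ) := Fin d → AddCircle (1 : ℝ)

abbrev L2R (d : ℕ) := Lp ℝ 2 (volume : Measure (Torus d))

/-!
Write `f = α • 1 + g` with `g ⊥ 1`. Since `P` kills constants and has range orthogonal to
them, `⟪P f, f⟫ = ⟪P g, g⟫ ≤ -c₂ ‖g‖²`; since `m_V` is self-adjoint and nonpositive,
`⟪m_V f, f⟫ ≤ -c₁ α² + 2 |α| ‖V‖₂ ‖g‖`, because `m_V 1 = V` and `⟪V, 1⟫ = -c₁`.
If `‖g‖ ≥ γ₀ ‖f‖` the gap of `P` alone gives `-c₂ γ₀² ‖f‖²`. Otherwise `f` is nearly constant: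
`α² ≥ (1 - γ₀²) ‖f‖²` and, as `γ₀ ‖V‖₂ = (2/9) c₁`, the cross term is at most `(4/9) c₁ ‖f‖²`,
leaving at most `-(41/81) c₁ ‖f‖²`.
-/

section SpectralGap

variable {E : Type*} [NormedAddCommGroup E] [InnerProductSpace ℝ E]

lemma norm_sq_eq_sq_add_norm_sq_of_inner_eq_zero {e g : E} (he : ‖e‖ = 1) (hg : ⟪g, e⟫ = 0)
    (α : ℝ) : ‖α • e + g‖ ^ 2 = α ^ 2 + ‖g‖ ^ 2 := by
  rw [norm_add_sq_real, real_inner_smul_left, real_inner_comm, hg, norm_smul, he,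
    Real.norm_eq_abs, mul_one, sq_abs]
  ring

lemma real_inner_map_smul_add_eq_of_map_eq_zero {e : E} {P : E →L[ℝ] E} (hPe : P e = 0)
    (hPe' : ∀ u, ⟪P u, e⟫ = 0) (α : ℝ) (g : E) :
    ⟪P (α • e + g), α • e + g⟫ = ⟪P g, g⟫ := by
  rw [map_add, map_smul, hPe, smul_zero, zero_add, inner_add_right, real_inner_smul_right,
    hPe', mul_zero, zero_add]

lemma real_inner_map_smul_add_le {M : E →L[ℝ] E} (hM : (M : E →ₗ[ℝ] E).IsSymmetric)
    (hM_nonpos : ∀ u, ⟪M u, u⟫ ≤ 0) (α : ℝ) (e g : E) :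
    ⟪M (α • e + g), α • e + g⟫ ≤ α ^ 2 * ⟪M e, e⟫ + 2 * |α| * (‖M e‖ * ‖g‖) := by
  have hsymm : ⟪M g, e⟫ = ⟪M e, g⟫ := by
    rw [real_inner_comm]; exact (hM e g).symm
  have hexpand : ⟪M (α • e + g), α • e + g⟫
      = α ^ 2 * ⟪M e, e⟫ + 2 * α * ⟪M e, g⟫ + ⟪M g, g⟫ := by
    simp only [map_add, map_smul, inner_add_left, inner_add_right, real_inner_smul_left,
      real_inner_smul_right, hsymm]
    ring
  have hcross : α * ⟪M e, g⟫ ≤ |α| * (‖M e‖ * ‖g‖) :=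
    (le_abs_self _).trans <| by
      rw [abs_mul]; exact mul_le_mul_of_nonneg_left (abs_real_inner_le_norm _ _) (abs_nonneg α)
  linarith [hM_nonpos g]

lemma mul_div_bounds_of_le {k c s : ℝ} (hk : 0 ≤ k) (hc : 0 ≤ c) (hcs : c ≤ s) :
    0 ≤ k * c / s ∧ k * c / s ≤ k ∧ k * c / s * s = k * c := by
  have hs : 0 ≤ s := hc.trans hcs
  refine ⟨by positivity, ?_, ?_⟩
  · rw [mul_div_assoc]
    exact mul_le_of_le_one_right hk (div_le_one_of_le₀ hcs hs)
  · rcases hs.eq_or_lt with rfl | hs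
    · simp [le_antisymm hcs hc]
    · field_simp

theorem real_inner_add_apply_self_le_of_spectralGap {e : E} (he : ‖e‖ = 1) {P M : E →L[ℝ] E}
    (hPe : P e = 0) (hPe' : ∀ u, ⟪P u, e⟫ = 0) {c₂ : ℝ} (hc₂ : 0 ≤ c₂)
    (hgap : ∀ g, ⟪g, e⟫ = 0 → ⟪P g, g⟫ ≤ -c₂ * ‖g‖ ^ 2)
    (hM : (M : E →ₗ[ℝ] E).IsSymmetric) (hM_nonpos : ∀ u, ⟪M u, u⟫ ≤ 0)
    {c₁ γ : ℝ} (hc₁ : c₁ = -⟪M e, e⟫) (hγ : γ = 2 / 9 * c₁ / ‖M e‖) (f : E) :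
    ⟪(P + M) f, f⟫ ≤ -min (c₂ * γ ^ 2) (c₁ / 2) * ‖f‖ ^ 2 := by
  have hc₁_nonneg : 0 ≤ c₁ := hc₁ ▸ neg_nonneg.2 (hM_nonpos e)
  have hc₁_le : c₁ ≤ ‖M e‖ := by
    simpa [hc₁, he] using (neg_le_abs _).trans (abs_real_inner_le_norm (M e) e)
  obtain ⟨hγ_nonneg, hγ_le, hγs⟩ := hγ ▸ mul_div_bounds_of_le (by norm_num) hc₁_nonneg hc₁_le
  set α := ⟪f, e⟫
  set g := f - α • e
  have hg : ⟪g, e⟫ = 0 := by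
    rw [inner_sub_left, real_inner_smul_left, real_inner_self_eq_norm_sq, he]; ring
  have hf : f = α • e + g := (add_sub_cancel (α • e) f).symm
  have hnorm : ‖f‖ ^ 2 = α ^ 2 + ‖g‖ ^ 2 :=
    hf ▸ norm_sq_eq_sq_add_norm_sq_of_inner_eq_zero he hg α
  have hPf : ⟪P f, f⟫ ≤ -c₂ * ‖g‖ ^ 2 := by
    rw [hf, real_inner_map_smul_add_eq_of_map_eq_zero hPe hPe']; exact hgap g hg
  have hMf : ⟪M f, f⟫ ≤ -c₁ * α ^ 2 + 2 * |α| * (‖M e‖ * ‖g‖) := by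
    rw [hf, hc₁]; linarith [real_inner_map_smul_add_le hM hM_nonpos α e g]
  rw [add_apply, inner_add_left]
  rcases le_or_gt (γ * ‖f‖) ‖g‖ with hbig | hsmall
  · have hg_sq : γ ^ 2 * ‖f‖ ^ 2 ≤ ‖g‖ ^ 2 := by
      rw [← mul_pow]; exact pow_le_pow_left₀ (by positivity) hbig 2
    have hmin : min (c₂ * γ ^ 2) (c₁ / 2) * ‖f‖ ^ 2 ≤ c₂ * (γ ^ 2 * ‖f‖ ^ 2) := by
      rw [← mul_assoc]; exact mul_le_mul_of_nonneg_right (min_le_left _ _) (sq_nonneg _)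
    nlinarith [hM_nonpos f, mul_le_mul_of_nonneg_left hg_sq hc₂]
  · have hg_sq : ‖g‖ ^ 2 ≤ 4 / 81 * ‖f‖ ^ 2 := by
      nlinarith [norm_nonneg g, mul_le_mul hγ_le hγ_le hγ_nonneg (by norm_num : (0 : ℝ) ≤ 2 / 9)]
    have hα : |α| ≤ ‖f‖ := by simpa using sq_le_sq.1 (by nlinarith : α ^ 2 ≤ ‖f‖ ^ 2)
    have hcross : |α| * (‖M e‖ * ‖g‖) ≤ 2 / 9 * c₁ * ‖f‖ ^ 2 :=
      calc |α| * (‖M e‖ * ‖g‖) ≤ ‖f‖ * (‖M e‖ * (γ * ‖f‖)) := by gcongr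
        _ = 2 / 9 * c₁ * ‖f‖ ^ 2 := by rw [← hγs]; ring
    have hmin : min (c₂ * γ ^ 2) (c₁ / 2) * ‖f‖ ^ 2 ≤ c₁ / 2 * ‖f‖ ^ 2 :=
      mul_le_mul_of_nonneg_right (min_le_right _ _) (sq_nonneg _)
    nlinarith [mul_le_mul_of_nonneg_left hg_sq hc₁_nonneg, mul_nonneg hc₂ (sq_nonneg ‖g‖)]

end SpectralGap

namespace MeasureTheory

section InnerProduct

variable {α : Type*} [MeasurableSpace α] {μ : Measure α} {one : Lp ℝ 2 μ}

lemma L2.real_inner_eq_integral (u v : Lp ℝ 2 μ) : ⟪u, v⟫ = ∫ x, u x * v x ∂μ := by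
  rw [L2.inner_def]
  simp only [RCLike.inner_apply, conj_trivial]
  exact integral_congr_ae (.of_forall fun x => mul_comm _ _)

lemma L2.real_inner_eq_integral_of_ae_eq_one (hone : one =ᵐ[μ] 1) (u : Lp ℝ 2 μ) :
    ⟪u, one⟫ = ∫ x, u x ∂μ := by
  rw [L2.real_inner_eq_integral]
  refine integral_congr_ae ?_
  filter_upwards [hone] with x hx
  simp [hx]

lemma L2.norm_eq_one_of_ae_eq_one [IsProbabilityMeasure μ] (hone : one =ᵐ[μ] 1) : ‖one‖ = 1 := by
  rw [Lp.norm_def, eLpNorm_congr_ae hone, Pi.one_def, eLpNorm_const _ two_ne_zero (NeZero.ne μ)]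
  simp

section MultiplicationOperator

variable {V : α → ℝ} {MV : Lp ℝ 2 μ →L[ℝ] Lp ℝ 2 μ}
  (hMV : ∀ u : Lp ℝ 2 μ, MV u =ᵐ[μ] fun x => V x * u x)
include hMV

lemma real_inner_map_eq_integral_of_ae_eq_mul (u v : Lp ℝ 2 μ) :
    ⟪MV u, v⟫ = ∫ x, V x * (u x * v x) ∂μ := by
  rw [L2.real_inner_eq_integral]
  refine integral_congr_ae ?_
  filter_upwards [hMV u] with x hx
  rw [hx, mul_assoc]

lemma isSymmetric_of_ae_eq_mul : (MV : Lp ℝ 2 μ →ₗ[ℝ] Lp ℝ 2 μ).IsSymmetric := fun u v => by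
  simp only [ContinuousLinearMap.coe_coe]
  rw [real_inner_comm (MV v), real_inner_map_eq_integral_of_ae_eq_mul hMV,
    real_inner_map_eq_integral_of_ae_eq_mul hMV]
  simp_rw [mul_comm (u _)]

lemma real_inner_map_self_nonpos_of_ae_eq_mul (hV : ∀ x, V x ≤ 0) (u : Lp ℝ 2 μ) :
    ⟪MV u, u⟫ ≤ 0 := by
  rw [real_inner_map_eq_integral_of_ae_eq_mul hMV]
  exact integral_nonpos fun x => mul_nonpos_of_nonpos_of_nonneg (hV x) (mul_self_nonneg _)

lemma norm_map_one_of_ae_eq_mul (hone : one =ᵐ[μ] 1) : ‖MV one‖ = (eLpNorm V 2 μ).toReal := by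
  rw [Lp.norm_def]
  congr 1
  refine eLpNorm_congr_ae ?_
  filter_upwards [hMV one, hone] with x hx h1
  simp [hx, h1]

lemma real_inner_map_one_one_of_ae_eq_mul (hone : one =ᵐ[μ] 1) :
    ⟪MV one, one⟫ = ∫ x, V x ∂μ := by
  rw [L2.real_inner_eq_integral_of_ae_eq_one hone]
  refine integral_congr_ae ?_
  filter_upwards [hMV one, hone] with x hx h1
  simp [hx, h1]

end MultiplicationOperator

end InnerProduct

section ConvolutionOperator

variable {G : Type*} [MeasurableSpace G] [AddCommGroup G] [MeasurableAdd₂ G] [MeasurableNeg G]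
  {μ : Measure G} [μ.IsAddLeftInvariant] [μ.IsNegInvariant]

lemma integral_integral_sub_mul [SFinite μ] {a u : G → ℝ} (ha : Integrable a μ)
    (hu : Integrable u μ) :
    ∫ x, (∫ y, a (x - y) * u y ∂μ) ∂μ = (∫ x, a x ∂μ) * ∫ x, u x ∂μ := by
  simp_rw [← convolution_mul_swap]
  exact integral_convolution _ ha hu

variable {a : G → ℝ} {P : Lp ℝ 2 μ →L[ℝ] Lp ℝ 2 μ} {one : Lp ℝ 2 μ}
  (hP : ∀ u : Lp ℝ 2 μ, P u =ᵐ[μ] fun x => (∫ y, a (x - y) * u y ∂μ) - u x)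
  (hone : one =ᵐ[μ] 1)
include hP hone

lemma map_one_eq_zero_of_ae_eq_conv_sub (ha_mass : ∫ z, a z ∂μ = 1) : P one = 0 := by
  rw [Lp.eq_zero_iff_ae_eq_zero]
  have hconv (x : G) : ∫ y, a (x - y) * one y ∂μ = 1 := by
    rw [integral_congr_ae (g := fun y => a (x - y)) (hone.mono fun y hy => by simp [hy]),
      integral_sub_left_eq_self, ha_mass]
  filter_upwards [hP one, hone] with x hx h1
  simp [hx, hconv, h1]

lemma real_inner_map_one_eq_zero_of_ae_eq_conv_sub [IsFiniteMeasure μ] (ha_int : Integrable a μ)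
    (ha_mass : ∫ z, a z ∂μ = 1) (u : Lp ℝ 2 μ) : ⟪P u, one⟫ = 0 := by
  have hu : Integrable u μ := (Lp.memLp u).integrable one_le_two
  have hconv : Integrable (fun x => ∫ y, a (x - y) * u y ∂μ) μ := by
    simp_rw [← convolution_mul_swap]
    exact ha_int.integrable_convolution _ hu
  rw [L2.real_inner_eq_integral_of_ae_eq_one hone, integral_congr_ae (hP u),
    integral_sub hconv hu, integral_integral_sub_mul ha_int hu, ha_mass, one_mul, sub_self]

end ConvolutionOperator

end MeasureTheory

instance : IsProbabilityMeasure (volume : Measure (AddCircle (1 : ℝ))) :=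
  ⟨by rw [AddCircle.measure_univ]; norm_num⟩

instance (d : ℕ) : (volume : Measure (Torus d)).IsNegInvariant :=
  Measure.pi.isNegInvariant _

theorem quadratic_form_gap_general (d : ℕ)
    (a : Torus d → ℝ)
    (ha_int : Integrable a (volume : Measure (Torus d)))
    (ha_mass : ∫ z, a z = 1)
    (V : Torus d → ℝ)
    (hV_nonpos : ∀ x, V x ≤ 0)
    (one : L2R d) (hone : (one : Torus d → ℝ) =ᵐ[volume] fun _ => 1)
    (P MV : L2R d →L[ℝ] L2R d)
    (hP : ∀ u : L2R d, (P u : Torus d → ℝ) =ᵐ[volume]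
      fun x => (∫ y, a (x - y) * u y) - u x)
    (hMV : ∀ u : L2R d, (MV u : Torus d → ℝ) =ᵐ[volume] fun x => V x * u x)
    (c₂ : ℝ) (hc₂ : 0 < c₂)
    (hgap : ∀ g : L2R d, ⟪g, one⟫ = 0 → ⟪P g, g⟫ ≤ -c₂ * ‖g‖ ^ 2)
    (c₁ γ₀ κ : ℝ)
    (hc₁_def : c₁ = ∫ x, |V x|)
    (hγ₀_def : γ₀ = (2 / 9) * c₁ / (eLpNorm V 2 (volume : Measure (Torus d))).toReal)
    (hκ_def : κ = min (c₂ * γ₀ ^ 2) (c₁ / 2)) :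
    ∀ f : L2R d, ⟪(P + MV) f, f⟫ ≤ -κ * ‖f‖ ^ 2 := by
  have hc₁ : c₁ = -⟪MV one, one⟫ := by
    rw [real_inner_map_one_one_of_ae_eq_mul hMV hone, hc₁_def, ← integral_neg]
    simp_rw [abs_of_nonpos (hV_nonpos _)]
  have hγ₀ : γ₀ = 2 / 9 * c₁ / ‖MV one‖ := by
    rw [norm_map_one_of_ae_eq_mul hMV hone, hγ₀_def]
  subst hκ_def
  exact real_inner_add_apply_self_le_of_spectralGap (L2.norm_eq_one_of_ae_eq_one hone)
    (map_one_eq_zero_of_ae_eq_conv_sub hP hone ha_mass)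
    (real_inner_map_one_eq_zero_of_ae_eq_conv_sub hP hone ha_int ha_mass) hc₂.le hgap
    (isSymmetric_of_ae_eq_mul hMV) (real_inner_map_self_nonpos_of_ae_eq_mul hMV hV_nonpos)
    hc₁ hγ₀

/-- Spectral gap for `L = P + m_V` with `P = A − I`, `A` convolution by a symmetric
probability density, and `V ≤ 0` negative on a set of positive measure: for every `f`,
`(Lf, f) ≤ −κ‖f‖²` with `κ = min{c₂γ₀², c₁/2}`, `c₁ = ‖V‖_{L¹}`,
`γ₀ = (2/9)c₁/‖V‖_{L²}`. -/
theorem quadratic_form_gap (d : ℕ)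
    (a : Torus d → ℝ)
    (ha_meas : Measurable a) (ha_nonneg : ∀ z, 0 ≤ a z)
    (ha_int : Integrable a (volume : Measure (Torus d)))
    (ha_mass : ∫ z, a z = 1)
    (ha_symm : ∀ z, a (-z) = a z)
    (V : Torus d → ℝ) (hV_meas : Measurable V)
    (CV : ℝ) (hV_bd : ∀ x, |V x| ≤ CV)
    (hV_nonpos : ∀ x, V x ≤ 0)
    (hV_neg : 0 < volume {x : Torus d | V x < 0})
    (one : L2R d) (hone : (one : Torus d → ℝ) =ᵐ[volume] fun _ => 1)
    (P MV : L2R d →L[ℝ] L2R d)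
    (hP : ∀ u : L2R d, (P u : Torus d → ℝ) =ᵐ[volume]
      fun x => (∫ y, a (x - y) * u y) - u x)
    (hMV : ∀ u : L2R d, (MV u : Torus d → ℝ) =ᵐ[volume] fun x => V x * u x)
    (c₂ : ℝ) (hc₂ : 0 < c₂) (hc₂' : c₂ ≤ 1)
    (hgap : ∀ g : L2R d, ⟪g, one⟫ = 0 → ⟪P g, g⟫ ≤ -c₂ * ‖g‖ ^ 2)
    (c₁ γ₀ κ : ℝ)
    (hc₁_def : c₁ = ∫ x, |V x|)
    (hγ₀_def : γ₀ = (2 / 9) * c₁ / (eLpNorm V 2 (volume : Measure (Torus d))).toReal)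
    (hκ_def : κ = min (c₂ * γ₀ ^ 2) (c₁ / 2)) :
    ∀ f : L2R d, ⟪(P + MV) f, f⟫ ≤ -κ * ‖f‖ ^ 2 :=
  quadratic_form_gap_general d a ha_int ha_mass V hV_nonpos one hone P MV hP hMV c₂ hc₂ hgap c₁ γ₀ κ
    hc₁_def hγ₀_def hκ_def
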